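/- A vertebrate family 𝒥 admits a good 2-partition if and only if there exists a pair of m-monotonic sequences (p,q) such that Y(m,p,q,∅,∅) holds (note 𝒦_m = ∅). -/

import Mathlib

/-- The open real interval corresponding to an integer pair `(a, b)`. -/
def iv (p : ℤ × ℤ) : Set ℝ := Set.Ioo (p.1 : ℝ) (p.2 : ℝ)

/-- Two integer-endpoint open intervals intersect (share a point). -/
def Meets (p q : ℤ × ℤ) : Prop := (iv p ∩ iv q).Nonempty

/-- A vertebrate family: distinct open intervals with integer endpoints contained in
`[0, m]`, containing the `m` unit intervals `(i-1, i)` for `1 ≤ i ≤ m`. -/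
def Vertebrate (m : ℤ) (J : Finset (ℤ × ℤ)) : Prop :=
  (∀ p ∈ J, 0 ≤ p.1 ∧ p.1 < p.2 ∧ p.2 ≤ m) ∧
  (∀ i : ℤ, 1 ≤ i → i ≤ m → ((i - 1, i) : ℤ × ℤ) ∈ J)

/-- `Bar v R S` (written `ℛ∣𝒮`): every interval in `R` intersects at most `v`
pairwise disjoint intervals of `S` other than itself. -/
def Bar (v : ℕ) (R S : Finset (ℤ × ℤ)) : Prop :=
  ∀ p ∈ R, ∀ T ⊆ S.erase p,
    ((T : Set (ℤ × ℤ)).Pairwise fun a b => ¬ Meets a b) →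
    (∀ q ∈ T, Meets p q) → T.card ≤ v

/-- An (ordered) 2-partition of a family `S`. -/
def TwoPartition (P Q S : Finset (ℤ × ℤ)) : Prop := P ∪ Q = S ∧ Disjoint P Q

/-- A good 2-partition: each part satisfies `𝒮∣𝒮`. -/
def GoodPartition (v : ℕ) (P Q S : Finset (ℤ × ℤ)) : Prop :=
  TwoPartition P Q S ∧ Bar v P P ∧ Bar v Q Q

/-- `Jsub S l r` = the subfamily of intervals of `S` contained in `(l, r)`. -/
def Jsub (S : Finset (ℤ × ℤ)) (l r : ℤ) : Finset (ℤ × ℤ) :=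
  S.filter fun p => l ≤ p.1 ∧ p.2 ≤ r

/-- The subfamily of intervals of length at most `v`. -/
def Jle (v : ℕ) (S : Finset (ℤ × ℤ)) : Finset (ℤ × ℤ) := S.filter fun p => p.2 - p.1 ≤ (v : ℤ)

/-- The subfamily of intervals of length greater than `v`. -/
def Jgt (v : ℕ) (S : Finset (ℤ × ℤ)) : Finset (ℤ × ℤ) := S.filter fun p => (v : ℤ) < p.2 - p.1

/-- `Ksub S s` = the subfamily of intervals `(a, b) ∈ S` with `a < s < b`. -/
def Ksub (S : Finset (ℤ × ℤ)) (s : ℤ) : Finset (ℤ × ℤ) := S.filter fun p => p.1 < s ∧ s < p.2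

/-- `alphaF S l r` = maximum size of a subfamily of pairwise disjoint intervals of `S`
each of which intersects the interval `(l, r)`. -/
noncomputable def alphaF (S : Finset (ℤ × ℤ)) (l r : ℤ) : ℕ :=
  sSup {k : ℕ | ∃ T ⊆ S, T.card = k ∧
    ((T : Set (ℤ × ℤ)).Pairwise fun a b => ¬ Meets a b) ∧ ∀ p ∈ T, Meets p (l, r)}

/-- `idx v R u s` = the maximum `i ∈ [0, s]` such that `u ≤ alphaF R i s ≤ v + 1`,
or `-1` if no such index exists. -/
noncomputable def idx (v : ℕ) (R : Finset (ℤ × ℤ)) (u : ℕ) (s : ℤ) : ℤ :=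
  sSup (insert (-1) {i : ℤ | 0 ≤ i ∧ i ≤ s ∧ u ≤ alphaF R i s ∧ alphaF R i s ≤ v + 1})

/-- An `s`-monotonic sequence `r = ⟨r_0, …, r_{v+2}⟩`. -/
def SMonotonic (v : ℕ) (s : ℤ) (r : ℕ → ℤ) : Prop :=
  r 0 = s ∧ r (v + 2) = -1 ∧ (∀ u ≤ v + 1, r (u + 1) ≤ r u) ∧
  ∀ u ≤ v + 1, (r (u + 1) = -1 ∧ r u = -1) ∨ r (u + 1) < r u

/-- An `s`-monotonic sequence `r` encodes `R ⊆ 𝒥(0,s)` if `r_u = i(R, u, s)` for all `u`. -/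
def Encodes (v : ℕ) (r : ℕ → ℤ) (R : Finset (ℤ × ℤ)) (s : ℤ) : Prop :=
  ∀ u ≤ v + 2, r u = idx v R u s

/-- `alphaSeq v r i` = the maximum `u ∈ [0, v+1]` with `i ≤ r u`. -/
noncomputable def alphaSeq (v : ℕ) (r : ℕ → ℤ) (i : ℤ) : ℕ :=
  sSup {u : ℕ | u ≤ v + 1 ∧ i ≤ r u}

/-- `(l, r)` is a vertebrate range for the 2-partition `(P, Q)` of `𝒥(0,s)`:
all backbone unit intervals contained in `(l, r)` lie in the same part. -/
def VertRange (P Q : Finset (ℤ × ℤ)) (s l r : ℤ) : Prop :=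
  0 ≤ l ∧ l < r ∧ r ≤ s ∧
  ((∀ i : ℤ, l < i → i ≤ r → ((i - 1, i) : ℤ × ℤ) ∈ P) ∨
   (∀ i : ℤ, l < i → i ≤ r → ((i - 1, i) : ℤ × ℤ) ∈ Q))

/-- A maximal vertebrate range. -/
def MaxVertRange (P Q : Finset (ℤ × ℤ)) (s l r : ℤ) : Prop :=
  VertRange P Q s l r ∧
  ∀ l' r', VertRange P Q s l' r' → l' ≤ l → r ≤ r' → l' = l ∧ r' = r

/-- A 2-partition `(P, Q)` of `𝒥(0,s)` is basic if for every maximal vertebrate range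
`(l, r)` its induced 2-partition of `𝒥(l,r)` is `(𝒥_≤(l,r), 𝒥_>(l,r))` or the swap. -/
def Basic (v : ℕ) (J P Q : Finset (ℤ × ℤ)) (s : ℤ) : Prop :=
  ∀ l r : ℤ, MaxVertRange P Q s l r →
    (P ∩ Jsub J l r = Jle v (Jsub J l r) ∧ Q ∩ Jsub J l r = Jgt v (Jsub J l r)) ∨
    (P ∩ Jsub J l r = Jgt v (Jsub J l r) ∧ Q ∩ Jsub J l r = Jle v (Jsub J l r))

/-- `(p, q)` (a pair of `s`-monotonic sequences) extends `(p', q')` (a pair of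
`s'`-monotonic sequences) by the 2-partition `(E, F)` of `𝒦_{s'} ∖ 𝒦_s`. -/
def ExtendsBy (v : ℕ) (J : Finset (ℤ × ℤ)) (s' s : ℤ) (p q p' q' : ℕ → ℤ)
    (E F : Finset (ℤ × ℤ)) : Prop :=
  let D := Jgt v (Jsub J s' s)
  let w := alphaF D s' s
  let w' := alphaF (F ∪ D) s' s
  let d := (s - s').toNat
  (∀ u : ℕ, 1 ≤ u → u ≤ min d (v + 1) → p u = s - (u : ℤ)) ∧
  (∀ u : ℕ, d < u → u ≤ v + 1 → p u = p' (u - d)) ∧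
  (∀ u : ℕ, 1 ≤ u → u ≤ min w' (v + 1) → q u = idx v (F ∪ D) u s) ∧
  (∀ u : ℕ, w' < u → u ≤ v + 1 → q u = q' (u - w))

/-- The dynamic-programming predicate `Y(s, p, q, 𝒜, ℬ)`. -/
def Ypred (v : ℕ) (J : Finset (ℤ × ℤ)) (s : ℤ) (p q : ℕ → ℤ)
    (A B : Finset (ℤ × ℤ)) : Prop :=
  ∃ P Q : Finset (ℤ × ℤ), TwoPartition P Q (Jsub J 0 s) ∧
    Bar v P P ∧ Bar v Q Q ∧ Basic v J P Q s ∧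
    Encodes v p P s ∧ Encodes v q Q s ∧
    Bar v P (P ∪ A) ∧ Bar v Q (Q ∪ B) ∧
    (0 < s → ((s - 1, s) : ℤ × ℤ) ∈ P)

/-- Two intervals overlap significantly: their intersection has length at least `2v+1`. -/
def SigOverlap (v : ℕ) (p q : ℤ × ℤ) : Prop :=
  (2 * (v : ℤ) + 1) ≤ min p.2 q.2 - max p.1 q.1

/-- The significant-overlap graph `H` on a family `J`. -/
def Hgraph (v : ℕ) (J : Finset (ℤ × ℤ)) : SimpleGraph {p : ℤ × ℤ // p ∈ J} :=
  SimpleGraph.fromRel fun p q => SigOverlap v p.1 q.1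


section AuxGoodPartition

lemma meets_iff {p q : ℤ × ℤ} :
    Meets p q ↔ p.1 < p.2 ∧ q.1 < q.2 ∧ p.1 < q.2 ∧ q.1 < p.2 := by
  constructor
  · rintro ⟨x, ⟨hx1, hx2⟩, ⟨hx3, hx4⟩⟩
    refine ⟨?_, ?_, ?_, ?_⟩
    · exact_mod_cast hx1.trans hx2
    · exact_mod_cast hx3.trans hx4
    · exact_mod_cast hx1.trans hx4
    · exact_mod_cast hx3.trans hx2
  · rintro ⟨h1, h2, h3, h4⟩
    have hmax : max p.1 q.1 < min p.2 q.2 := max_lt (lt_min h1 h3) (lt_min h4 h2)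
    have hc : ((max p.1 q.1 : ℤ) : ℝ) + 1 ≤ ((min p.2 q.2 : ℤ) : ℝ) := by
      exact_mod_cast hmax
    have c1 : ((p.1 : ℤ) : ℝ) ≤ ((max p.1 q.1 : ℤ) : ℝ) := by
      exact_mod_cast le_max_left p.1 q.1
    have c2 : ((q.1 : ℤ) : ℝ) ≤ ((max p.1 q.1 : ℤ) : ℝ) := by
      exact_mod_cast le_max_right p.1 q.1
    have c3 : ((min p.2 q.2 : ℤ) : ℝ) ≤ ((p.2 : ℤ) : ℝ) := by
      exact_mod_cast min_le_left p.2 q.2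
    have c4 : ((min p.2 q.2 : ℤ) : ℝ) ≤ ((q.2 : ℤ) : ℝ) := by
      exact_mod_cast min_le_right p.2 q.2
    exact ⟨((max p.1 q.1 : ℤ) : ℝ) + 1/2,
      ⟨by linarith, by linarith⟩, ⟨by linarith, by linarith⟩⟩

lemma meets_pair {t : ℤ × ℤ} {l r : ℤ} :
    Meets t (l, r) ↔ t.1 < t.2 ∧ l < r ∧ t.1 < r ∧ l < t.2 := by
  simp [meets_iff]

/-- Geometric bound: pairwise disjoint intervals each meeting `p` number at most
the length of `p`. -/
lemma card_le_of_meets {p : ℤ × ℤ} (T : Finset (ℤ × ℤ))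
    (hpw : (↑T : Set (ℤ × ℤ)).Pairwise fun a b => ¬ Meets a b)
    (hm : ∀ t ∈ T, Meets p t) : T.card ≤ (p.2 - p.1).toNat := by
  rw [← Int.card_Ico p.1 p.2]
  apply Finset.card_le_card_of_injOn (fun t => max t.1 p.1)
  · intro t ht
    have h := meets_iff.1 (hm t ht)
    rw [Finset.mem_coe, Finset.mem_Ico]
    exact ⟨le_max_right _ _, max_lt h.2.2.2 h.1⟩
  · intro t ht t' ht' heq
    by_contra hne
    apply hpw ht ht' hne
    have h1 := meets_iff.1 (hm t (Finset.mem_coe.1 ht))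
    have h2 := meets_iff.1 (hm t' (Finset.mem_coe.1 ht'))
    rw [meets_iff]
    refine ⟨h1.2.1, h2.2.1, ?_, ?_⟩
    · calc t.1 ≤ max t.1 p.1 := le_max_left _ _
        _ = max t'.1 p.1 := heq
        _ < t'.2 := max_lt h2.2.1 h2.2.2.1
    · calc t'.1 ≤ max t'.1 p.1 := le_max_left _ _
        _ = max t.1 p.1 := heq.symm
        _ < t.2 := max_lt h1.2.1 h1.2.2.1

/-- All backbone units inside `p` belong to `S`. -/
def MonoIn (S : Finset (ℤ × ℤ)) (p : ℤ × ℤ) : Prop :=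
  ∀ i : ℤ, p.1 < i → i ≤ p.2 → ((i - 1, i) : ℤ × ℤ) ∈ S

/-- A long interval all of whose units are in `S` cannot itself be in `S`
when `Bar v S S`. -/
lemma long_not_mem {v : ℕ} (hv : 1 ≤ v) {S : Finset (ℤ × ℤ)} (hbar : Bar v S S)
    {q : ℤ × ℤ} (hmono : MonoIn S q) (hlen : (v : ℤ) < q.2 - q.1) : q ∉ S := by
  intro hqS
  have hv' : (1 : ℤ) ≤ (v : ℤ) := by exact_mod_cast hv
  set T : Finset (ℤ × ℤ) := (Finset.Icc (q.1 + 1) q.2).image (fun i => (i - 1, i)) with hTdef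
  have hTsub : T ⊆ S.erase q := by
    intro t ht
    simp only [hTdef, Finset.mem_image, Finset.mem_Icc] at ht
    obtain ⟨i, ⟨hi1, hi2⟩, rfl⟩ := ht
    refine Finset.mem_erase.2 ⟨?_, hmono i (by omega) hi2⟩
    intro he
    have e1 : i - 1 = q.1 := congrArg Prod.fst he
    have e2 : i = q.2 := congrArg Prod.snd he
    omega
  have hpw : (↑T : Set (ℤ × ℤ)).Pairwise fun a b => ¬ Meets a b := by
    intro a ha b hb hab
    simp only [hTdef, Finset.coe_image, Set.mem_image, Finset.mem_coe,
      Finset.mem_Icc] at ha hb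
    obtain ⟨i, hi, rfl⟩ := ha
    obtain ⟨j, hj, rfl⟩ := hb
    have hij : i ≠ j := fun h => hab (by rw [h])
    intro hmeets
    rw [meets_iff] at hmeets
    simp only at hmeets
    omega
  have hmeet : ∀ t ∈ T, Meets q t := by
    intro t ht
    simp only [hTdef, Finset.mem_image, Finset.mem_Icc] at ht
    obtain ⟨i, ⟨hi1, hi2⟩, rfl⟩ := ht
    rw [meets_iff]
    refine ⟨by omega, by simp only; omega, by simp only; omega, by simp only; omega⟩
  have hcard : T.card = (q.2 - q.1).toNat := by
    rw [hTdef, Finset.card_image_of_injective _ (fun a b h => congrArg Prod.snd h),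
      Int.card_Icc]
    omega
  have := hbar q hqS T hTsub hpw hmeet
  omega

open Classical in
/-- The canonical re-partition: intervals whose units are all in `P` go to the
first part iff short; intervals whose units are all in `Q` go to the first part
iff long; mixed intervals keep their original side. -/
noncomputable def canon (v : ℕ) (J P Q : Finset (ℤ × ℤ)) : Finset (ℤ × ℤ) :=
  J.filter fun q =>
    if MonoIn P q then q.2 - q.1 ≤ (v : ℤ)
    else if MonoIn Q q then (v : ℤ) < q.2 - q.1
    else q ∈ P

lemma mem_canon₁ {v : ℕ} {J P Q : Finset (ℤ × ℤ)} {q : ℤ × ℤ} (hqJ : q ∈ J)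
    (h1 : MonoIn P q) : q ∈ canon v J P Q ↔ q.2 - q.1 ≤ (v : ℤ) := by
  simp [canon, Finset.mem_filter, hqJ, h1]

lemma mem_canon₂ {v : ℕ} {J P Q : Finset (ℤ × ℤ)} {q : ℤ × ℤ} (hqJ : q ∈ J)
    (h1 : ¬ MonoIn P q) (h2 : MonoIn Q q) :
    q ∈ canon v J P Q ↔ (v : ℤ) < q.2 - q.1 := by
  simp [canon, Finset.mem_filter, hqJ, h1, h2]

lemma mem_canon₃ {v : ℕ} {J P Q : Finset (ℤ × ℤ)} {q : ℤ × ℤ} (hqJ : q ∈ J)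
    (h1 : ¬ MonoIn P q) (h2 : ¬ MonoIn Q q) :
    q ∈ canon v J P Q ↔ q ∈ P := by
  simp [canon, Finset.mem_filter, hqJ, h1, h2]

lemma canon_subset {v : ℕ} {J P Q : Finset (ℤ × ℤ)} : canon v J P Q ⊆ J :=
  Finset.filter_subset _ _

lemma not_mono_both {P Q : Finset (ℤ × ℤ)} (hdisj : Disjoint P Q) {q : ℤ × ℤ}
    (hq : q.1 < q.2) : ¬ (MonoIn P q ∧ MonoIn Q q) := by
  rintro ⟨h1, h2⟩
  have m1 := h1 (q.1 + 1) (by omega) (by omega)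
  have m2 := h2 (q.1 + 1) (by omega) (by omega)
  exact Finset.disjoint_left.1 hdisj m1 m2

lemma canon_compl {v : ℕ} {J P Q : Finset (ℤ × ℤ)}
    (hvalid : ∀ q ∈ J, q.1 < q.2) (hunion : P ∪ Q = J) (hdisj : Disjoint P Q)
    {q : ℤ × ℤ} (hqJ : q ∈ J) :
    q ∈ canon v J Q P ↔ q ∉ canon v J P Q := by
  have hq := hvalid q hqJ
  have hPQ : q ∈ P ∨ q ∈ Q := Finset.mem_union.1 (by rw [hunion]; exact hqJ)
  by_cases h1 : MonoIn P q <;> by_cases h2 : MonoIn Q q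
  · exact absurd ⟨h1, h2⟩ (not_mono_both hdisj hq)
  · rw [mem_canon₁ hqJ h1, mem_canon₂ hqJ h2 h1]
    omega
  · rw [mem_canon₂ hqJ h1 h2, mem_canon₁ hqJ h2]
    omega
  · rw [mem_canon₃ hqJ h1 h2, mem_canon₃ hqJ h2 h1]
    constructor
    · intro hQ hP
      exact Finset.disjoint_left.1 hdisj hP hQ
    · intro hP
      exact hPQ.resolve_left hP

lemma canon_twoPartition {v : ℕ} {J P Q : Finset (ℤ × ℤ)}
    (hvalid : ∀ q ∈ J, q.1 < q.2) (hunion : P ∪ Q = J) (hdisj : Disjoint P Q) :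
    TwoPartition (canon v J P Q) (canon v J Q P) J := by
  constructor
  · apply Finset.Subset.antisymm
    · exact Finset.union_subset canon_subset canon_subset
    · intro q hq
      rcases Classical.em (q ∈ canon v J P Q) with h | h
      · exact Finset.mem_union_left _ h
      · exact Finset.mem_union_right _ ((canon_compl hvalid hunion hdisj hq).2 h)
  · rw [Finset.disjoint_right]
    intro q hq
    exact (canon_compl hvalid hunion hdisj (canon_subset hq)).1 hq

lemma bar_canon {v : ℕ} (hv : 1 ≤ v) {J P Q : Finset (ℤ × ℤ)}
    (hvalid : ∀ q ∈ J, q.1 < q.2) (hunion : P ∪ Q = J)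
    (hBP : Bar v P P) (hBQ : Bar v Q Q) :
    Bar v (canon v J P Q) (canon v J P Q) := by
  have hv' : (1 : ℤ) ≤ (v : ℤ) := by exact_mod_cast hv
  intro p hp T hT hpw hmeet
  have hpJ : p ∈ J := canon_subset hp
  by_cases hplen : p.2 - p.1 ≤ (v : ℤ)
  · have h := card_le_of_meets T hpw hmeet
    have hpv := hvalid p hpJ
    omega
  · push_neg at hplen
    have memP : ∀ t, t ∈ canon v J P Q → (v : ℤ) < t.2 - t.1 → t ∈ P := by
      intro t htc htlen
      have htJ : t ∈ J := canon_subset htc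
      by_cases h1 : MonoIn P t
      · have := (mem_canon₁ (v := v) (Q := Q) htJ h1).1 htc
        omega
      · by_cases h2 : MonoIn Q t
        · have hnot := long_not_mem hv hBQ h2 htlen
          have : t ∈ P ∨ t ∈ Q := Finset.mem_union.1 (by rw [hunion]; exact htJ)
          exact this.resolve_right hnot
        · exact (mem_canon₃ htJ h1 h2).1 htc
    have hpP : p ∈ P := memP p hp hplen
    classical
    set g : ℤ × ℤ → ℤ × ℤ := fun t =>
      if MonoIn P t ∧ t.2 - t.1 ≤ (v : ℤ) then (max t.1 p.1, max t.1 p.1 + 1)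
      else t with hg
    have key : ∀ t ∈ T, (g t ∈ P ∧ g t ≠ p ∧ Meets p (g t)) ∧
        (t.1 ≤ (g t).1 ∧ (g t).2 ≤ t.2 ∧ (g t).1 < (g t).2) := by
      intro t ht
      have htc : t ∈ canon v J P Q := Finset.mem_of_mem_erase (hT ht)
      have htJ : t ∈ J := canon_subset htc
      have htp : Meets p t := hmeet t ht
      have hm4 := meets_iff.1 htp
      have htne : t ≠ p := Finset.ne_of_mem_erase (hT ht)
      by_cases hcase : MonoIn P t ∧ t.2 - t.1 ≤ (v : ℤ)
      · have hgt : g t = (max t.1 p.1, max t.1 p.1 + 1) := by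
          rw [hg]; exact if_pos hcase
        have hx1 : t.1 ≤ max t.1 p.1 := le_max_left _ _
        have hx2 : p.1 ≤ max t.1 p.1 := le_max_right _ _
        have hx3 : max t.1 p.1 < t.2 := max_lt hm4.2.1 hm4.2.2.1
        have hx4 : max t.1 p.1 < p.2 := max_lt hm4.2.2.2 hm4.1
        have hunit : ((max t.1 p.1, max t.1 p.1 + 1) : ℤ × ℤ) ∈ P := by
          have h := hcase.1 (max t.1 p.1 + 1) (by omega) (by omega)
          simpa using h
        rw [hgt]
        refine ⟨⟨hunit, ?_, ?_⟩, by simp only; omega⟩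
        · intro he
          have e1 : max t.1 p.1 = p.1 := congrArg Prod.fst he
          have e2 : max t.1 p.1 + 1 = p.2 := congrArg Prod.snd he
          omega
        · rw [meets_iff]
          refine ⟨hm4.1, by simp only; omega, by simp only; omega, by simp only; omega⟩
      · have hgt : g t = t := by rw [hg]; exact if_neg hcase
        rw [hgt]
        have htP : t ∈ P := by
          by_cases h1 : MonoIn P t
          · exact absurd ⟨h1, (mem_canon₁ (v := v) (Q := Q) htJ h1).1 htc⟩ hcase
          · by_cases h2 : MonoIn Q t
            · exact memP t htc ((mem_canon₂ htJ h1 h2).1 htc)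
            · exact (mem_canon₃ htJ h1 h2).1 htc
        exact ⟨⟨htP, htne, htp⟩, le_refl _, le_refl _, hm4.2.1⟩
    have hinj : Set.InjOn g ↑T := by
      intro t ht t' ht' heq
      by_contra hne
      apply hpw ht ht' hne
      have k1 := (key t (Finset.mem_coe.1 ht)).2
      have k2 := (key t' (Finset.mem_coe.1 ht')).2
      rw [heq] at k1
      rw [meets_iff]
      omega
    have himage : T.image g ⊆ P.erase p := by
      intro b hb
      obtain ⟨t, ht, rfl⟩ := Finset.mem_image.1 hb
      exact Finset.mem_erase.2 ⟨(key t ht).1.2.1, (key t ht).1.1⟩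
    have hpw' : (↑(T.image g) : Set (ℤ × ℤ)).Pairwise fun a b => ¬ Meets a b := by
      intro a ha b hb hab
      simp only [Finset.coe_image, Set.mem_image, Finset.mem_coe] at ha hb
      obtain ⟨t, ht, rfl⟩ := ha
      obtain ⟨t', ht', rfl⟩ := hb
      have htt' : t ≠ t' := fun h => hab (by rw [h])
      have hnm := hpw (Finset.mem_coe.2 ht) (Finset.mem_coe.2 ht') htt'
      intro hmeets
      apply hnm
      rw [meets_iff] at hmeets ⊢
      have k1 := (key t ht).2
      have k2 := (key t' ht').2
      omega
    have hmeet' : ∀ b ∈ T.image g, Meets p b := by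
      intro b hb
      obtain ⟨t, ht, rfl⟩ := Finset.mem_image.1 hb
      exact (key t ht).1.2.2
    have hc := hBP p hpP (T.image g) himage hpw' hmeet'
    rwa [Finset.card_image_of_injOn hinj] at hc

lemma unit_mem_canon {v : ℕ} (hv : 1 ≤ v) {m : ℤ} {J P Q : Finset (ℤ × ℤ)}
    (hJ : Vertebrate m J) (hunion : P ∪ Q = J) (hdisj : Disjoint P Q)
    {i : ℤ} (hi1 : 0 < i) (hi2 : i ≤ m) :
    ((i - 1, i) : ℤ × ℤ) ∈ canon v J P Q ↔ ((i - 1, i) : ℤ × ℤ) ∈ P := by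
  have hv' : (1 : ℤ) ≤ (v : ℤ) := by exact_mod_cast hv
  have huJ : ((i - 1, i) : ℤ × ℤ) ∈ J := hJ.2 i (by omega) hi2
  by_cases hP : ((i - 1, i) : ℤ × ℤ) ∈ P
  · have hmono : MonoIn P (i - 1, i) := by
      intro j hj1 hj2
      simp only at hj1 hj2
      have : j = i := by omega
      subst this
      exact hP
    rw [mem_canon₁ huJ hmono]
    simp only
    constructor
    · intro _; exact hP
    · intro _; omega
  · have hQ : ((i - 1, i) : ℤ × ℤ) ∈ Q :=
      (Finset.mem_union.1 (by rw [hunion]; exact huJ)).resolve_left hP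
    have hmonoQ : MonoIn Q (i - 1, i) := by
      intro j hj1 hj2
      simp only at hj1 hj2
      have : j = i := by omega
      subst this
      exact hQ
    have hmonoP : ¬ MonoIn P (i - 1, i) := by
      intro h
      exact hP (h i (by simp only; omega) (le_refl _))
    rw [mem_canon₂ huJ hmonoP hmonoQ]
    simp only
    constructor
    · intro h; omega
    · intro h; exact absurd h hP

lemma basic_canon {v : ℕ} (hv : 1 ≤ v) {m : ℤ} {J P Q : Finset (ℤ × ℤ)}
    (hJ : Vertebrate m J) (hunion : P ∪ Q = J) (hdisj : Disjoint P Q) :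
    Basic v J (canon v J P Q) (canon v J Q P) m := by
  have hvalid : ∀ q ∈ J, q.1 < q.2 := fun q hq => (hJ.1 q hq).2.1
  intro l r hmax
  obtain ⟨⟨hl0, hlr, hrm, hunits⟩, -⟩ := hmax
  have memJsub : ∀ q ∈ Jsub J l r, q ∈ J ∧ l ≤ q.1 ∧ q.2 ≤ r := by
    intro q hq
    simpa [Jsub, Finset.mem_filter] using hq
  have mkJle : ∀ q, q ∈ Jle v (Jsub J l r) ↔ q ∈ Jsub J l r ∧ q.2 - q.1 ≤ (v : ℤ) := by
    intro q; simp [Jle, Finset.mem_filter]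
  have mkJgt : ∀ q, q ∈ Jgt v (Jsub J l r) ↔ q ∈ Jsub J l r ∧ (v : ℤ) < q.2 - q.1 := by
    intro q; simp [Jgt, Finset.mem_filter]
  rcases hunits with hcase | hcase
  · left
    have hmono : ∀ q ∈ Jsub J l r, MonoIn P q := by
      intro q hq
      obtain ⟨hqJ, hq1, hq2⟩ := memJsub q hq
      intro i hi1 hi2
      exact (unit_mem_canon hv hJ hunion hdisj (by omega) (by omega)).1
        (hcase i (by omega) (by omega))
    have hmono' : ∀ q ∈ Jsub J l r, ¬ MonoIn Q q := by
      intro q hq h2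
      exact not_mono_both hdisj (hvalid q (memJsub q hq).1) ⟨hmono q hq, h2⟩
    constructor
    · ext q
      rw [Finset.mem_inter, mkJle]
      constructor
      · rintro ⟨h1, h2⟩
        exact ⟨h2, (mem_canon₁ (memJsub q h2).1 (hmono q h2)).1 h1⟩
      · rintro ⟨h1, h2⟩
        exact ⟨(mem_canon₁ (memJsub q h1).1 (hmono q h1)).2 h2, h1⟩
    · ext q
      rw [Finset.mem_inter, mkJgt]
      constructor
      · rintro ⟨h1, h2⟩
        exact ⟨h2, (mem_canon₂ (memJsub q h2).1 (hmono' q h2) (hmono q h2)).1 h1⟩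
      · rintro ⟨h1, h2⟩
        exact ⟨(mem_canon₂ (memJsub q h1).1 (hmono' q h1) (hmono q h1)).2 h2, h1⟩
  · right
    have hmono : ∀ q ∈ Jsub J l r, MonoIn Q q := by
      intro q hq
      obtain ⟨hqJ, hq1, hq2⟩ := memJsub q hq
      intro i hi1 hi2
      exact (unit_mem_canon hv hJ (by rw [Finset.union_comm]; exact hunion)
        hdisj.symm (by omega) (by omega)).1 (hcase i (by omega) (by omega))
    have hmono' : ∀ q ∈ Jsub J l r, ¬ MonoIn P q := by
      intro q hq h2
      exact not_mono_both hdisj (hvalid q (memJsub q hq).1) ⟨h2, hmono q hq⟩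
    constructor
    · ext q
      rw [Finset.mem_inter, mkJgt]
      constructor
      · rintro ⟨h1, h2⟩
        exact ⟨h2, (mem_canon₂ (memJsub q h2).1 (hmono' q h2) (hmono q h2)).1 h1⟩
      · rintro ⟨h1, h2⟩
        exact ⟨(mem_canon₂ (memJsub q h1).1 (hmono' q h1) (hmono q h1)).2 h2, h1⟩
    · ext q
      rw [Finset.mem_inter, mkJle]
      constructor
      · rintro ⟨h1, h2⟩
        exact ⟨h2, (mem_canon₁ (memJsub q h2).1 (hmono q h2)).1 h1⟩
      · rintro ⟨h1, h2⟩
        exact ⟨(mem_canon₁ (memJsub q h1).1 (hmono q h1)).2 h2, h1⟩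

lemma zero_mem_aset (S : Finset (ℤ × ℤ)) (l r : ℤ) :
    0 ∈ {k : ℕ | ∃ T ⊆ S, T.card = k ∧
      ((T : Set (ℤ × ℤ)).Pairwise fun a b => ¬ Meets a b) ∧ ∀ p ∈ T, Meets p (l, r)} :=
  ⟨∅, Finset.empty_subset _, Finset.card_empty, by simp, by simp⟩

lemma bdd_aset (S : Finset (ℤ × ℤ)) (l r : ℤ) :
    BddAbove {k : ℕ | ∃ T ⊆ S, T.card = k ∧
      ((T : Set (ℤ × ℤ)).Pairwise fun a b => ¬ Meets a b) ∧ ∀ p ∈ T, Meets p (l, r)} := by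
  refine ⟨S.card, ?_⟩
  rintro k ⟨T, hT, rfl, -, -⟩
  exact Finset.card_le_card hT

lemma alphaF_le {S : Finset (ℤ × ℤ)} {l r : ℤ} {n : ℕ}
    (h : ∀ T ⊆ S, ((T : Set (ℤ × ℤ)).Pairwise fun a b => ¬ Meets a b) →
      (∀ p ∈ T, Meets p (l, r)) → T.card ≤ n) : alphaF S l r ≤ n := by
  apply csSup_le ⟨0, zero_mem_aset S l r⟩
  rintro k ⟨T, hT, rfl, hpw, hm⟩
  exact h T hT hpw hm

lemma le_alphaF {S : Finset (ℤ × ℤ)} {l r : ℤ} (T : Finset (ℤ × ℤ)) (hT : T ⊆ S)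
    (hpw : (T : Set (ℤ × ℤ)).Pairwise fun a b => ¬ Meets a b)
    (hm : ∀ p ∈ T, Meets p (l, r)) : T.card ≤ alphaF S l r :=
  le_csSup (bdd_aset S l r) ⟨T, hT, rfl, hpw, hm⟩

lemma alphaF_spec (S : Finset (ℤ × ℤ)) (l r : ℤ) :
    ∃ T ⊆ S, T.card = alphaF S l r ∧
      ((T : Set (ℤ × ℤ)).Pairwise fun a b => ¬ Meets a b) ∧ ∀ p ∈ T, Meets p (l, r) :=
  Nat.sSup_mem ⟨0, zero_mem_aset S l r⟩ (bdd_aset S l r)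

lemma alphaF_self (S : Finset (ℤ × ℤ)) (r : ℤ) : alphaF S r r = 0 := by
  apply Nat.le_zero.1
  apply alphaF_le
  intro T hT hpw hm
  have : T = ∅ := by
    apply Finset.eq_empty_iff_forall_notMem.2
    intro t ht
    have := meets_pair.1 (hm t ht)
    omega
  simp [this]

lemma alphaF_anti {S : Finset (ℤ × ℤ)} {l l' r : ℤ} (h : l ≤ l') :
    alphaF S l' r ≤ alphaF S l r := by
  obtain ⟨T, hT, hc, hpw, hm⟩ := alphaF_spec S l' r
  rw [← hc]
  apply le_alphaF T hT hpw
  intro t ht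
  have h4 := meets_pair.1 (hm t ht)
  rw [meets_pair]
  omega

lemma alphaF_step (S : Finset (ℤ × ℤ)) (l r : ℤ) :
    alphaF S l r ≤ alphaF S (l + 1) r + 1 := by
  classical
  obtain ⟨T, hT, hc, hpw, hm⟩ := alphaF_spec S l r
  rw [← hc]
  by_cases hr : l + 1 < r
  · have h1 : (T.filter fun t => l + 1 < t.2).card ≤ alphaF S (l + 1) r := by
      apply le_alphaF _ ((Finset.filter_subset _ _).trans hT)
        (hpw.mono (Finset.coe_subset.2 (Finset.filter_subset _ _)))
      intro t ht
      obtain ⟨htT, hlt⟩ := Finset.mem_filter.1 ht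
      have h4 := meets_pair.1 (hm t htT)
      rw [meets_pair]
      omega
    have h2 : (T.filter fun t => ¬ l + 1 < t.2).card ≤ 1 := by
      rw [Finset.card_le_one]
      intro a ha b hb
      simp only [Finset.mem_filter, not_lt] at ha hb
      by_contra hne
      apply hpw (Finset.mem_coe.2 ha.1) (Finset.mem_coe.2 hb.1) hne
      have h4 := meets_pair.1 (hm a ha.1)
      have h5 := meets_pair.1 (hm b hb.1)
      rw [meets_iff]
      omega
    have h3 := Finset.card_filter_add_card_filter_not
      (s := T) (p := fun t => l + 1 < t.2)
    omega
  · have : T.card ≤ 1 := by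
      rw [Finset.card_le_one]
      intro a ha b hb
      by_contra hne
      apply hpw (Finset.mem_coe.2 ha) (Finset.mem_coe.2 hb) hne
      have h4 := meets_pair.1 (hm a ha)
      have h5 := meets_pair.1 (hm b hb)
      rw [meets_iff]
      omega
    omega

lemma smono_idx {v : ℕ} {m : ℤ} (hm : 1 ≤ m) (R : Finset (ℤ × ℤ)) :
    SMonotonic v m (fun u => idx v R u m) := by
  have hbdd : ∀ u : ℕ, BddAbove (insert (-1)
      {i : ℤ | 0 ≤ i ∧ i ≤ m ∧ u ≤ alphaF R i m ∧ alphaF R i m ≤ v + 1}) := by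
    intro u
    refine ⟨m, ?_⟩
    intro x hx
    rcases Set.mem_insert_iff.1 hx with rfl | h
    · omega
    · exact h.2.1
  have hne : ∀ u : ℕ, (insert (-1)
      {i : ℤ | 0 ≤ i ∧ i ≤ m ∧ u ≤ alphaF R i m ∧ alphaF R i m ≤ v + 1} : Set ℤ).Nonempty :=
    fun u => ⟨-1, Set.mem_insert _ _⟩
  have hmem : ∀ u : ℕ, idx v R u m ∈ insert (-1)
      {i : ℤ | 0 ≤ i ∧ i ≤ m ∧ u ≤ alphaF R i m ∧ alphaF R i m ≤ v + 1} :=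
    fun u => Int.csSup_mem (hne u) (hbdd u)
  have hneg : ∀ u : ℕ, (-1 : ℤ) ≤ idx v R u m :=
    fun u => le_csSup (hbdd u) (Set.mem_insert _ _)
  refine ⟨?_, ?_, ?_, ?_⟩
  · apply le_antisymm
    · apply csSup_le (hne 0)
      intro x hx
      rcases Set.mem_insert_iff.1 hx with rfl | h
      · omega
      · exact h.2.1
    · apply le_csSup (hbdd 0)
      refine Set.mem_insert_iff.2 (Or.inr ⟨by omega, le_refl m, Nat.zero_le _, ?_⟩)
      rw [alphaF_self]
      exact Nat.zero_le _
  · have hempty : {i : ℤ | 0 ≤ i ∧ i ≤ m ∧ (v + 2 : ℕ) ≤ alphaF R i m ∧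
        alphaF R i m ≤ v + 1} = ∅ := by
      apply Set.eq_empty_iff_forall_notMem.2
      intro i hi
      obtain ⟨-, -, h1, h2⟩ := hi
      omega
    show sSup _ = (-1 : ℤ)
    rw [hempty]
    simp
  · intro u hu
    apply csSup_le_csSup (hbdd u) (hne (u + 1))
    apply Set.insert_subset_insert
    intro i hi
    obtain ⟨g1, g2, g3, g4⟩ := hi
    exact ⟨g1, g2, by omega, g4⟩
  · intro u hu
    show idx v R (u + 1) m = -1 ∧ idx v R u m = -1 ∨ idx v R (u + 1) m < idx v R u m
    by_cases h1 : idx v R (u + 1) m = -1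
    · by_cases h2 : idx v R u m = -1
      · exact Or.inl ⟨h1, h2⟩
      · right
        rw [h1]
        exact lt_of_le_of_ne (hneg u) (Ne.symm h2)
    · right
      rcases Set.mem_insert_iff.1 (hmem (u + 1)) with heq | hmem'
      · exact absurd heq h1
      · obtain ⟨hi0, him, hiu, hiv⟩ := hmem'
        have hne' : idx v R (u + 1) m ≠ m := by
          intro he
          rw [he, alphaF_self] at hiu
          omega
        have hstep := alphaF_step R (idx v R (u + 1) m) m
        have hanti : alphaF R (idx v R (u + 1) m + 1) m ≤ v + 1 :=
          le_trans (alphaF_anti (by omega)) hiv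
        have hle : idx v R (u + 1) m + 1 ≤ idx v R u m := by
          apply le_csSup (hbdd u)
          exact Set.mem_insert_iff.2 (Or.inr ⟨by omega, by omega, by omega, hanti⟩)
        omega

lemma jsub_all {m : ℤ} {J : Finset (ℤ × ℤ)} (hJ : Vertebrate m J) :
    Jsub J 0 m = J := by
  apply Finset.filter_true_of_mem
  intro q hq
  exact ⟨(hJ.1 q hq).1, (hJ.1 q hq).2.2⟩

end AuxGoodPartition

/-- A vertebrate family `J` admits a good 2-partition if and only if there is a
pair of `m`-monotonic sequences `(p, q)` with `Y(m, p, q, ∅, ∅)`. -/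
theorem good_partition_iff_Ypred
    (v : ℕ) (hv : 1 ≤ v) (m : ℤ) (hm : 1 ≤ m)
    (J : Finset (ℤ × ℤ)) (hJ : Vertebrate m J) :
    (∃ P Q : Finset (ℤ × ℤ), GoodPartition v P Q J) ↔
    (∃ p q : ℕ → ℤ, SMonotonic v m p ∧ SMonotonic v m q ∧ Ypred v J m p q ∅ ∅) := by
  constructor
  · rintro ⟨P, Q, ⟨hunion, hdisj⟩, hBP, hBQ⟩
    have hvalid : ∀ q ∈ J, q.1 < q.2 := fun q hq => (hJ.1 q hq).2.1
    set P2 := canon v J P Q with hP2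
    set Q2 := canon v J Q P with hQ2
    have hunion' : Q ∪ P = J := by rw [Finset.union_comm]; exact hunion
    have htwo : TwoPartition P2 Q2 J := canon_twoPartition hvalid hunion hdisj
    have htwo' : TwoPartition Q2 P2 J :=
      ⟨by rw [Finset.union_comm]; exact htwo.1, htwo.2.symm⟩
    have hB2P : Bar v P2 P2 := bar_canon hv hvalid hunion hBP hBQ
    have hB2Q : Bar v Q2 Q2 := bar_canon hv hvalid hunion' hBQ hBP
    have hbasic : Basic v J P2 Q2 m := basic_canon hv hJ hunion hdisj
    have hbasic' : Basic v J Q2 P2 m := basic_canon hv hJ hunion' hdisj.symm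
    have hmJ : ((m - 1, m) : ℤ × ℤ) ∈ J := hJ.2 m (by omega) (le_refl m)
    have hjsub := jsub_all hJ
    by_cases hu : ((m - 1, m) : ℤ × ℤ) ∈ P2
    · refine ⟨fun u => idx v P2 u m, fun u => idx v Q2 u m,
        smono_idx hm P2, smono_idx hm Q2, ?_⟩
      refine ⟨P2, Q2, by rw [hjsub]; exact htwo, hB2P, hB2Q, hbasic,
        fun u _ => rfl, fun u _ => rfl, ?_, ?_, fun _ => hu⟩
      · rw [Finset.union_empty]; exact hB2P
      · rw [Finset.union_empty]; exact hB2Q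
    · have hu' : ((m - 1, m) : ℤ × ℤ) ∈ Q2 := by
        have : ((m - 1, m) : ℤ × ℤ) ∈ P2 ∪ Q2 := by rw [htwo.1]; exact hmJ
        exact (Finset.mem_union.1 this).resolve_left hu
      refine ⟨fun u => idx v Q2 u m, fun u => idx v P2 u m,
        smono_idx hm Q2, smono_idx hm P2, ?_⟩
      refine ⟨Q2, P2, by rw [hjsub]; exact htwo', hB2Q, hB2P, hbasic',
        fun u _ => rfl, fun u _ => rfl, ?_, ?_, fun _ => hu'⟩
      · rw [Finset.union_empty]; exact hB2Q
      · rw [Finset.union_empty]; exact hB2P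
  · rintro ⟨p, q, -, -, P, Q, htwo, hBP, hBQ, -, -, -, -, -, -⟩
    refine ⟨P, Q, ?_, hBP, hBQ⟩
    rwa [jsub_all hJ] at htwo
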